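/- For the NC(1) distribution with density f(x) = c₁·exp(-β x²/2)/(1+(1-β)x²) where c₁ = √(1-β)·exp(-β/(2(1-β)))/(2π·Φ(-√(β/(1-β)))) and 0 < β < 1, the second moment is E(X²) = (1-β)^{-1}·(c₁√(2π)/√β − 1). -/

import Mathlib

open MeasureTheory Real Set

/-- The standard normal cumulative distribution function. -/
noncomputable def Phi (t : ℝ) : ℝ := ∫ u in Set.Iic t, Real.exp (-u ^ 2 / 2) / Real.sqrt (2 * π)

set_option maxHeartbeats 1000000

lemma gauss_integrable : Integrable (fun u : ℝ => Real.exp (-u ^ 2 / 2)) := by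
  have h : (fun u : ℝ => Real.exp (-u ^ 2 / 2)) = fun u => Real.exp (-2⁻¹ * u ^ 2) :=
    funext fun u => by congr 1; ring
  rw [h]; exact integrable_exp_neg_mul_sq (by norm_num)

lemma Phi_eq (t : ℝ) : Phi t = (Real.sqrt (2*π))⁻¹ * ∫ u in Iic t, Real.exp (-u ^ 2 / 2) := by
  rw [Phi, ← integral_const_mul]
  congr 1; ext u; ring

lemma Phi_pos (t : ℝ) : 0 < Phi t := by
  rw [Phi_eq]
  apply mul_pos (by positivity)
  apply (setIntegral_pos_iff_support_of_nonneg_ae ?_ ?_).2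
  · have : Function.support (fun u : ℝ => Real.exp (-u ^ 2 / 2)) = univ := by
      ext u; simp [Real.exp_ne_zero]
    rw [this, univ_inter]
    simp [Real.volume_Iic]
  · filter_upwards with u using (Real.exp_pos _).le
  · exact gauss_integrable.integrableOn

lemma intIic (t : ℝ) : ∫ u in Iic t, Real.exp (-u ^ 2 / 2) = Real.sqrt (2*π) * Phi t := by
  rw [Phi_eq, ← mul_assoc, mul_inv_cancel₀ (by positivity), one_mul]

-- gaussian tail
lemma tail {q : ℝ} (hq : 0 < q) (c : ℝ) :
    ∫ s in Ioi c, Real.exp (-(q^2 * s^2)) = (Real.sqrt 2 * q)⁻¹ * (Real.sqrt (2*π) * Phi (-(Real.sqrt 2 * q * c))) := by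
  have hb : 0 < Real.sqrt 2 * q := by positivity
  have h1 := integral_comp_mul_left_Ioi (fun u => Real.exp (-u^2/2)) c hb
  have h2 : ∀ s : ℝ, Real.exp (-(Real.sqrt 2 * q * s)^2/2) = Real.exp (-(q^2*s^2)) := by
    intro s
    congr 1
    rw [mul_pow, mul_pow, Real.sq_sqrt (by norm_num : (2:ℝ) ≥ 0)]
    ring
  simp only [h2] at h1
  rw [h1, smul_eq_mul]
  congr 1
  have h3 : ∀ u : ℝ, Real.exp (-u^2/2) = Real.exp (-(-u)^2/2) := by intro u; ring_nf
  calc ∫ u in Ioi (Real.sqrt 2 * q * c), Real.exp (-u^2/2)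
      = ∫ u in Ioi (Real.sqrt 2 * q * c), Real.exp (-(-u)^2/2) := by simp only [← h3]
    _ = ∫ u in Iic (-(Real.sqrt 2 * q * c)), Real.exp (-u^2/2) := integral_comp_neg_Ioi (Real.sqrt 2 * q * c) (fun u => Real.exp (-u^2/2))
    _ = Real.sqrt (2*π) * Phi (-(Real.sqrt 2 * q * c)) := intIic _

lemma intA {a : ℝ} (ha : 0 < a) : ∫ t in Ioi (0:ℝ), Real.exp (-(a*t)) = a⁻¹ := by
  have := integral_comp_mul_left_Ioi (fun x => Real.exp (-x)) 0 ha
  simp only [mul_zero, integral_exp_neg_Ioi, neg_zero, Real.exp_zero, smul_eq_mul, mul_one] at this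
  simpa using this

lemma intA' {a : ℝ} (ha : 0 < a) : IntegrableOn (fun t => Real.exp (-(a*t))) (Ioi (0:ℝ)) := by
  simpa [neg_mul] using exp_neg_integrableOn_Ioi 0 ha

lemma hint_lem {p q : ℝ} (hp : 0 < p) (hq : 0 < q) :
    Integrable fun x : ℝ => Real.exp (-p * x ^ 2) / (x ^ 2 + q ^ 2) := by
  have hg := (integrable_exp_neg_mul_sq hp).div_const (q ^ 2)
  refine hg.mono ?_ ?_
  · apply Continuous.aestronglyMeasurable
    exact (Real.continuous_exp.comp (by continuity)).div (by continuity)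
      (fun x => by positivity)
  · filter_upwards with x
    have h1 : (0:ℝ) < x ^ 2 + q ^ 2 := by positivity
    rw [Real.norm_eq_abs, Real.norm_eq_abs, abs_of_nonneg (by positivity),
      abs_of_nonneg (by positivity)]
    gcongr
    nlinarith [sq_nonneg x]

noncomputable def Fnc (p q : ℝ) (z : ℝ × ℝ) : ℝ :=
  Real.exp (-p * z.1 ^ 2) * Real.exp (-((z.1 ^ 2 + q ^ 2) * z.2))

lemma Fnc_nonneg (p q : ℝ) (z : ℝ × ℝ) : 0 ≤ Fnc p q z := by
  unfold Fnc; positivity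

lemma Fnc_cont (p q : ℝ) : Continuous (Fnc p q) := by
  unfold Fnc
  exact (Real.continuous_exp.comp (by continuity)).mul
    (Real.continuous_exp.comp (by continuity))

lemma fubini_step {p q : ℝ} (hp : 0 < p) (hq : 0 < q) :
    ∫ x : ℝ, Real.exp (-p * x ^ 2) / (x ^ 2 + q ^ 2)
      = ∫ t in Ioi (0:ℝ), Real.exp (-(q ^ 2 * t)) * Real.sqrt (π / (p + t)) := by
  have hpos : ∀ x : ℝ, (0:ℝ) < x ^ 2 + q ^ 2 := fun x => by positivity
  have step1 : ∀ x : ℝ, ∫ t in Ioi (0:ℝ), Fnc p q (x, t)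
      = Real.exp (-p * x ^ 2) / (x ^ 2 + q ^ 2) := by
    intro x
    simp only [Fnc]
    rw [integral_const_mul, intA (hpos x), div_eq_mul_inv]
  have hFint : Integrable (Fnc p q) ((volume : Measure ℝ).prod (volume.restrict (Ioi 0))) := by
    rw [integrable_prod_iff (Fnc_cont p q).aestronglyMeasurable]
    constructor
    · filter_upwards with x
      have := (intA' (hpos x)).const_mul (Real.exp (-p * x ^ 2))
      simpa [Fnc] using this
    · have he : (fun x : ℝ => ∫ t in Ioi (0:ℝ), ‖Fnc p q (x, t)‖)
          = fun x : ℝ => Real.exp (-p * x ^ 2) / (x ^ 2 + q ^ 2) := by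
        funext x
        rw [← step1 x]
        congr 1
        funext t
        rw [Real.norm_eq_abs, abs_of_nonneg (Fnc_nonneg p q _)]
      rw [he]
      exact hint_lem hp hq
  have swap := integral_integral_swap (f := fun x t => Fnc p q (x, t)) hFint
  have inner : ∀ t : ℝ, ∫ x : ℝ, Fnc p q (x, t)
      = Real.exp (-(q ^ 2 * t)) * Real.sqrt (π / (p + t)) := by
    intro t
    have h2 : ∀ x : ℝ, Fnc p q (x, t)
        = Real.exp (-(q ^ 2 * t)) * Real.exp (-(p + t) * x ^ 2) := by
      intro x
      simp only [Fnc]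
      rw [← Real.exp_add, ← Real.exp_add]
      congr 1
      ring
    simp only [h2]
    rw [integral_const_mul, integral_gaussian]
  calc ∫ x : ℝ, Real.exp (-p * x ^ 2) / (x ^ 2 + q ^ 2)
      = ∫ x : ℝ, ∫ t in Ioi (0:ℝ), Fnc p q (x, t) := by simp only [step1]
    _ = ∫ t in Ioi (0:ℝ), ∫ x : ℝ, Fnc p q (x, t) := swap
    _ = ∫ t in Ioi (0:ℝ), Real.exp (-(q ^ 2 * t)) * Real.sqrt (π / (p + t)) := by
        simp only [inner]

lemma keyK {p q : ℝ} (hp : 0 < p) (hq : 0 < q) :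
    ∫ x : ℝ, Real.exp (-p * x ^ 2) / (x ^ 2 + q ^ 2)
      = 2 * π / q * Real.exp (p * q ^ 2) * Phi (-(Real.sqrt 2 * q * Real.sqrt p)) := by
  rw [fubini_step hp hq]
  have hsp : 0 < Real.sqrt p := Real.sqrt_pos.2 hp
  have himg : (fun s : ℝ => s ^ 2 - p) '' Ioi (Real.sqrt p) = Ioi (0:ℝ) := by
    ext y
    simp only [mem_image, mem_Ioi]
    constructor
    · rintro ⟨s, hs, rfl⟩
      have h1 : Real.sqrt p ^ 2 < s ^ 2 := by
        apply pow_lt_pow_left₀ hs hsp.le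
        norm_num
      rw [Real.sq_sqrt hp.le] at h1
      linarith
    · intro hy
      refine ⟨Real.sqrt (p + y), ?_, ?_⟩
      · exact Real.sqrt_lt_sqrt hp.le (by linarith)
      · rw [Real.sq_sqrt (by linarith)]; ring
  have hderiv : ∀ s ∈ Ioi (Real.sqrt p),
      HasDerivWithinAt (fun s : ℝ => s ^ 2 - p) (2 * s) (Ioi (Real.sqrt p)) s := by
    intro s _
    have h := (hasDerivAt_pow 2 s).sub_const p
    have h2 : (2:ℕ) * s ^ (2 - 1) = 2 * s := by norm_num
    rw [h2] at h
    exact h.hasDerivWithinAt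
  have hinj : InjOn (fun s : ℝ => s ^ 2 - p) (Ioi (Real.sqrt p)) := by
    intro a ha b hb hab
    simp only [mem_Ioi] at ha hb
    simp only at hab
    have h1 : a ^ 2 = b ^ 2 := by linarith
    have h2 : (a - b) * (a + b) = 0 := by nlinarith
    rcases mul_eq_zero.1 h2 with h | h
    · linarith
    · nlinarith
  rw [← himg, integral_image_eq_integral_abs_deriv_smul measurableSet_Ioi hderiv hinj]
  rw [setIntegral_congr_fun measurableSet_Ioi
    (g := fun s : ℝ => (2 * Real.sqrt π * Real.exp (p * q ^ 2)) * Real.exp (-(q ^ 2 * s ^ 2))) ?_]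
  · rw [integral_const_mul, tail hq]
    have h2π : Real.sqrt (2 * π) = Real.sqrt 2 * Real.sqrt π :=
      Real.sqrt_mul (by norm_num) π
    have hππ : Real.sqrt π * Real.sqrt π = π := Real.mul_self_sqrt Real.pi_pos.le
    have h2s : Real.sqrt 2 ≠ 0 := by positivity
    rw [h2π]
    field_simp
    ring_nf
    rw [Real.sq_sqrt Real.pi_pos.le]
    ring
  · intro s hs
    simp only [mem_Ioi] at hs
    have hs0 : 0 < s := lt_trans hsp hs
    have e1 : p + (s ^ 2 - p) = s ^ 2 := by ring
    have e2 : Real.sqrt (π / s ^ 2) = Real.sqrt π / s := by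
      rw [Real.sqrt_div Real.pi_pos.le, Real.sqrt_sq hs0.le]
    have e3 : Real.exp (-(q ^ 2 * (s ^ 2 - p)))
        = Real.exp (p * q ^ 2) * Real.exp (-(q ^ 2 * s ^ 2)) := by
      rw [← Real.exp_add]; congr 1; ring
    simp only [smul_eq_mul]
    rw [e1, e2, e3, abs_of_nonneg (by positivity : (0:ℝ) ≤ 2 * s)]
    field_simp

theorem nc1_second_moment (β c₁ : ℝ) (hβ : 0 < β) (hβ1 : β < 1)
    (hc₁ : c₁ = Real.sqrt (1 - β) * Real.exp (-(β / (2 * (1 - β)))) /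
        (2 * π * Phi (-Real.sqrt (β / (1 - β))))) :
    ∫ x : ℝ, x ^ 2 * (c₁ * Real.exp (-(β * x ^ 2) / 2) / (1 + (1 - β) * x ^ 2))
      = (1 - β)⁻¹ * (c₁ * Real.sqrt (2 * π) / Real.sqrt β - 1) := by
  have hγ : 0 < 1 - β := by linarith
  have hp : 0 < β / 2 := by linarith
  have hsγ : 0 < Real.sqrt (1 - β) := Real.sqrt_pos.2 hγ
  have hq : 0 < (Real.sqrt (1 - β))⁻¹ := by positivity
  have hq2 : ((Real.sqrt (1 - β))⁻¹) ^ 2 = (1 - β)⁻¹ := by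
    rw [inv_pow, Real.sq_sqrt hγ.le]
  have hE : Integrable fun x : ℝ => Real.exp (-(β * x ^ 2) / 2) := by
    have h : (fun x : ℝ => Real.exp (-(β * x ^ 2) / 2))
        = fun x => Real.exp (-(β / 2) * x ^ 2) := funext fun x => by congr 1; ring
    rw [h]; exact integrable_exp_neg_mul_sq hp
  have hDpos : ∀ x : ℝ, (0:ℝ) < 1 + (1 - β) * x ^ 2 := fun x => by positivity
  have hED_eq : (fun x : ℝ => Real.exp (-(β * x ^ 2) / 2) / (1 + (1 - β) * x ^ 2))
      = fun x => (1 - β)⁻¹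
          * (Real.exp (-(β / 2) * x ^ 2) / (x ^ 2 + ((Real.sqrt (1 - β))⁻¹) ^ 2)) := by
    funext x
    rw [hq2]
    have h1 : Real.exp (-(β * x ^ 2) / 2) = Real.exp (-(β / 2) * x ^ 2) := by congr 1; ring
    have h2 : 1 + (1 - β) * x ^ 2 = (1 - β) * (x ^ 2 + (1 - β)⁻¹) := by
      field_simp; ring
    rw [h1, h2]
    rw [div_mul_eq_div_div_swap, div_eq_mul_inv _ (1-β), mul_comm]
  have hED : Integrable (fun x : ℝ => Real.exp (-(β * x ^ 2) / 2) / (1 + (1 - β) * x ^ 2)) := by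
    rw [hED_eq]; exact (hint_lem hp hq).const_mul _
  have hI : ∫ x : ℝ, Real.exp (-(β * x ^ 2) / 2) / (1 + (1 - β) * x ^ 2)
      = (1 - β)⁻¹ * (2 * π / (Real.sqrt (1 - β))⁻¹
          * Real.exp (β / 2 * ((Real.sqrt (1 - β))⁻¹) ^ 2)
          * Phi (-(Real.sqrt 2 * (Real.sqrt (1 - β))⁻¹ * Real.sqrt (β / 2)))) := by
    rw [hED_eq, integral_const_mul, keyK hp hq]
  have harg : Real.sqrt 2 * (Real.sqrt (1 - β))⁻¹ * Real.sqrt (β / 2)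
      = Real.sqrt (β / (1 - β)) := by
    rw [Real.sqrt_div hβ.le, Real.sqrt_div hβ.le]
    have h2s : Real.sqrt 2 ≠ 0 := by positivity
    field_simp
  have hexp : β / 2 * ((Real.sqrt (1 - β))⁻¹) ^ 2 = β / (2 * (1 - β)) := by
    rw [hq2]; field_simp
  have hΦ := Phi_pos (-(Real.sqrt (β / (1 - β))))
  have hc₁I : c₁ * ∫ x : ℝ, Real.exp (-(β * x ^ 2) / 2) / (1 + (1 - β) * x ^ 2) = 1 := by
    rw [hI, harg, hexp, hc₁, Real.exp_neg]
    set Φv := Phi (-Real.sqrt (β / (1 - β))) with hΦv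
    set S := Real.sqrt (1 - β) with hS
    set Ee := Real.exp (β / (2 * (1 - β))) with hEe
    have hss : S * S = 1 - β := Real.mul_self_sqrt hγ.le
    have hS0 : S ≠ 0 := hsγ.ne'
    have hΦ0 : Φv ≠ 0 := hΦ.ne'
    have hE0 : Ee ≠ 0 := Real.exp_ne_zero _
    field_simp
    linear_combination hss
  have hIE : ∫ x : ℝ, Real.exp (-(β * x ^ 2) / 2) = Real.sqrt (2 * π) / Real.sqrt β := by
    have h : (fun x : ℝ => Real.exp (-(β * x ^ 2) / 2))
        = fun x => Real.exp (-(β / 2) * x ^ 2) := funext fun x => by congr 1; ring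
    rw [h, integral_gaussian, show π / (β / 2) = 2 * π / β by field_simp,
      Real.sqrt_div (by positivity : (0:ℝ) ≤ 2 * π)]
  have hsplit : ∀ x : ℝ, x ^ 2 * (c₁ * Real.exp (-(β * x ^ 2) / 2) / (1 + (1 - β) * x ^ 2))
      = c₁ * (1 - β)⁻¹ * (Real.exp (-(β * x ^ 2) / 2)
          - Real.exp (-(β * x ^ 2) / 2) / (1 + (1 - β) * x ^ 2)) := by
    intro x
    have hD := (hDpos x).ne'
    field_simp
    ring
  simp only [hsplit]
  rw [integral_const_mul, integral_sub hE hED, hIE]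
  linear_combination -(1 - β)⁻¹ * hc₁I
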